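/- Let ≺ be a left-invariant total order on B_3 whose positive cone is exactly the union of the set of σ1-positive elements and the set {σ2^k : k ≥ 1}. Then the ≺-convex subgroups of B_3 are exactly the three subgroups {1}, the cyclic subgroup ⟨σ2⟩ generated by σ2, and B_3 itself. -/

import Mathlib

/-- The single braid relation of `B₃`: σ₁σ₂σ₁ = σ₂σ₁σ₂. -/
def braidRels3 : Set (FreeGroup (Fin 2)) :=
  { FreeGroup.of 0 * FreeGroup.of 1 * FreeGroup.of 0 *
      (FreeGroup.of 1 * FreeGroup.of 0 * FreeGroup.of 1)⁻¹ }

/-- The braid group `B₃ = ⟨σ₁, σ₂ | σ₁σ₂σ₁ = σ₂σ₁σ₂⟩`. -/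
abbrev B₃ : Type := PresentedGroup braidRels3

def σ₁ : B₃ := PresentedGroup.of 0
def σ₂ : B₃ := PresentedGroup.of 1

/-- A left-invariant total order (left order) on a group `G`. -/
def IsLeftOrder {G : Type*} [Group G] (r : G → G → Prop) : Prop :=
  IsStrictTotalOrder G r ∧ ∀ h f g : G, r f g → r (h * f) (h * g)

/-- A subgroup `C` is convex for `r` if `f ≺ g ≺ h` with `f, h ∈ C` implies `g ∈ C`. -/
def IsConvexSubgroup {G : Type*} [Group G] (r : G → G → Prop) (C : Subgroup G) : Prop :=
  ∀ f g h : G, f ∈ C → h ∈ C → r f g → r g h → g ∈ C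

/-- The group element represented by a single letter `σᵢ^{±1}`
(`true` = positive letter, `false` = inverse letter). -/
def letterB₃ (x : Fin 2 × Bool) : B₃ :=
  if x.2 then PresentedGroup.of x.1 else (PresentedGroup.of x.1)⁻¹

/-- An element of `B₃` is σ₁-positive if it is represented by some word in
`σ₁^{±1}, σ₂^{±1}` containing at least one `σ₁` and no `σ₁⁻¹`. -/
def IsSigmaOnePositive (β : B₃) : Prop :=
  ∃ w : List (Fin 2 × Bool),
    (w.map letterB₃).prod = β ∧ ((0 : Fin 2), true) ∈ w ∧ ((0 : Fin 2), false) ∉ w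

/-!
In the Dehornoy order every power of `σ₂` lies below every σ₁-positive braid, so `⟨σ₂⟩` is convex,
and a convex subgroup of `⟨σ₂⟩` containing some `σ₂ ^ k ≠ 1` contains `σ₂ ^ 2k` and hence `σ₂`.
A convex subgroup not inside `⟨σ₂⟩` contains a σ₁-positive `x`, hence `σ₂` (as `1 ≺ σ₂ ≺ x`).
By the braid relation some `y = σ₂ ^ m * x` has `σ₁⁻¹ y` σ₁-positive, while `y σ₁` is σ₁-positive
anyway; thus `y⁻¹ ≺ σ₁ ≺ y` puts `σ₁`, and with it all of `B₃`, in the subgroup.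
-/

namespace IsLeftOrder

variable {G : Type*} [Group G] {r : G → G → Prop}

theorem lt_iff_one_lt_inv_mul (hr : IsLeftOrder r) {f g : G} : r f g ↔ r 1 (f⁻¹ * g) :=
  ⟨fun h => by simpa using hr.2 f⁻¹ f g h, fun h => by simpa using hr.2 f 1 (f⁻¹ * g) h⟩

theorem asymm (hr : IsLeftOrder r) {f g : G} (hfg : r f g) : ¬r g f :=
  have := hr.1
  fun hgf => irrefl_of r f (trans_of r hfg hgf)

theorem one_lt_or_one_lt_inv (hr : IsLeftOrder r) {g : G} (hg : g ≠ 1) : r 1 g ∨ r 1 g⁻¹ := by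
  have := hr.1
  rcases trichotomous_of r 1 g with h | h | h
  · exact .inl h
  · exact absurd h.symm hg
  · exact .inr (by simpa using hr.lt_iff_one_lt_inv_mul.mp h)

theorem isConvexSubgroup_bot (hr : IsLeftOrder r) : IsConvexSubgroup r (⊥ : Subgroup G) := by
  rintro f g h hf hh hfg hgh
  rw [Subgroup.mem_bot] at hf hh
  subst hf hh
  exact absurd hgh (hr.asymm hfg)

end IsLeftOrder

theorem isConvexSubgroup_top {G : Type*} [Group G] (r : G → G → Prop) :
    IsConvexSubgroup r (⊤ : Subgroup G) :=
  fun _ _ _ _ _ _ _ => Subgroup.mem_top _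

theorem σ₁_mul_σ₂_mul_σ₁ : σ₁ * σ₂ * σ₁ = σ₂ * σ₁ * σ₂ :=
  eq_of_mul_inv_eq_one (PresentedGroup.one_of_mem rfl)

theorem σ₁_inv_mul_σ₂_mul_σ₁ : σ₁⁻¹ * σ₂ * σ₁ = σ₂ * σ₁ * σ₂⁻¹ := by
  calc σ₁⁻¹ * σ₂ * σ₁ = σ₁⁻¹ * (σ₂ * σ₁ * σ₂) * σ₂⁻¹ := by group
    _ = σ₂ * σ₁ * σ₂⁻¹ := by rw [← σ₁_mul_σ₂_mul_σ₁]; group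

theorem eq_top_of_σ₁_mem_of_σ₂_mem {C : Subgroup B₃} (h₁ : σ₁ ∈ C) (h₂ : σ₂ ∈ C) : C = ⊤ :=
  C.eq_top_iff'.mpr <| PresentedGroup.generated_by _ C fun j => by fin_cases j <;> assumption

theorem letterB₃_zero_true : letterB₃ (0, true) = σ₁ := rfl
theorem letterB₃_one_true : letterB₃ (1, true) = σ₂ := rfl
theorem letterB₃_one_false : letterB₃ (1, false) = σ₂⁻¹ := rfl

def noSigmaOneInv : Submonoid B₃ where
  carrier := {β | ∃ w : List (Fin 2 × Bool), (w.map letterB₃).prod = β ∧ ((0 : Fin 2), false) ∉ w}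
  one_mem' := ⟨[], rfl, List.not_mem_nil⟩
  mul_mem' := by
    rintro _ _ ⟨u, rfl, hu⟩ ⟨v, rfl, hv⟩
    exact ⟨u ++ v, by simp, by simp [hu, hv]⟩

theorem σ₂_zpow_mem_noSigmaOneInv (n : ℤ) : σ₂ ^ n ∈ noSigmaOneInv := by
  have h₂ : σ₂ ∈ noSigmaOneInv := ⟨[(1, true)], by simp [letterB₃_one_true], by simp⟩
  have h₂' : σ₂⁻¹ ∈ noSigmaOneInv := ⟨[(1, false)], by simp [letterB₃_one_false], by simp⟩
  obtain ⟨k, rfl | rfl⟩ := Int.eq_nat_or_neg n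
  · simpa using pow_mem h₂ k
  · simpa using pow_mem h₂' k

namespace IsSigmaOnePositive

theorem mem_noSigmaOneInv {β : B₃} (hβ : IsSigmaOnePositive β) : β ∈ noSigmaOneInv :=
  let ⟨w, hw, _, hw'⟩ := hβ
  ⟨w, hw, hw'⟩

theorem mul_mem_right {a b : B₃} (ha : IsSigmaOnePositive a) (hb : b ∈ noSigmaOneInv) :
    IsSigmaOnePositive (a * b) := by
  obtain ⟨u, rfl, hu, hu'⟩ := ha
  obtain ⟨v, rfl, hv'⟩ := hb
  exact ⟨u ++ v, by simp, by simp [hu], by simp [hu', hv']⟩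

theorem mul_mem_left {a b : B₃} (ha : a ∈ noSigmaOneInv) (hb : IsSigmaOnePositive b) :
    IsSigmaOnePositive (a * b) := by
  obtain ⟨u, rfl, hu'⟩ := ha
  obtain ⟨v, rfl, hv, hv'⟩ := hb
  exact ⟨u ++ v, by simp, by simp [hv], by simp [hu', hv']⟩

end IsSigmaOnePositive

theorem isSigmaOnePositive_σ₁ : IsSigmaOnePositive σ₁ :=
  ⟨[(0, true)], by simp [letterB₃_zero_true], by simp, by simp⟩

theorem isSigmaOnePositive_σ₁_inv_mul_σ₂_mul_σ₁ : IsSigmaOnePositive (σ₁⁻¹ * σ₂ * σ₁) := by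
  rw [σ₁_inv_mul_σ₂_mul_σ₁]
  simpa using (isSigmaOnePositive_σ₁.mul_mem_left (σ₂_zpow_mem_noSigmaOneInv 1)).mul_mem_right
    (σ₂_zpow_mem_noSigmaOneInv (-1))

/-- Induction on the word, from the left: a leading `σ₁` gives `σ₁⁻¹σ₂σ₁ = σ₂σ₁σ₂⁻¹` (take
`m = 1`), a leading `σ₂⁻¹` is cancelled by one more `σ₂` in `σ₂ ^ m`, and a leading `σ₂` is moved
out as the prefix `σ₁⁻¹σ₂σ₁`, which has no letter `σ₁⁻¹`. -/
theorem IsSigmaOnePositive.exists_σ₁_inv_mul_σ₂_pow_mul {x : B₃} (hx : IsSigmaOnePositive x) :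
    ∃ m : ℕ, IsSigmaOnePositive (σ₁⁻¹ * σ₂ ^ m * x) := by
  obtain ⟨w, rfl, hσ₁, hσ₁inv⟩ := hx
  induction w with
  | nil => simp at hσ₁
  | cons l t ih =>
    have ht : (t.map letterB₃).prod ∈ noSigmaOneInv :=
      ⟨t, rfl, fun h => hσ₁inv (List.mem_cons_of_mem _ h)⟩
    have ih' : l ≠ (0, true) →
        ∃ m : ℕ, IsSigmaOnePositive (σ₁⁻¹ * σ₂ ^ m * (t.map letterB₃).prod) :=
      fun hl => ih ((List.mem_cons.mp hσ₁).resolve_left (Ne.symm hl))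
        fun h => hσ₁inv (List.mem_cons_of_mem _ h)
    obtain ⟨i, b⟩ := l
    obtain rfl | rfl : i = 0 ∨ i = 1 := by omega
    all_goals cases b
    · simp at hσ₁inv
    · refine ⟨1, ?_⟩
      simpa [letterB₃_zero_true, mul_assoc] using
        isSigmaOnePositive_σ₁_inv_mul_σ₂_mul_σ₁.mul_mem_right ht
    · obtain ⟨m, hm⟩ := ih' (by simp)
      refine ⟨m + 1, ?_⟩
      convert hm using 1
      simp [letterB₃_one_false, pow_succ, mul_assoc]
    · obtain ⟨m, hm⟩ := ih' (by simp)
      refine ⟨m, ?_⟩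
      convert hm.mul_mem_left isSigmaOnePositive_σ₁_inv_mul_σ₂_mul_σ₁.mem_noSigmaOneInv using 1
      simp only [List.map_cons, List.prod_cons, letterB₃_one_true]
      group

def HasDehornoyCone (r : B₃ → B₃ → Prop) : Prop :=
  ∀ β : B₃, r 1 β ↔ IsSigmaOnePositive β ∨ ∃ k : ℕ, 1 ≤ k ∧ β = σ₂ ^ k

section DehornoyOrder

open Subgroup

variable {r : B₃ → B₃ → Prop}

theorem one_lt_of_isSigmaOnePositive (hcone : HasDehornoyCone r) {β : B₃}
    (hβ : IsSigmaOnePositive β) : r 1 β :=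
  (hcone β).2 (.inl hβ)

theorem σ₂_pow_lt_σ₂_pow (hr : IsLeftOrder r) (hcone : HasDehornoyCone r)
    {m n : ℕ} (hmn : m < n) : r (σ₂ ^ m) (σ₂ ^ n) := by
  have hquot : (σ₂ ^ m)⁻¹ * σ₂ ^ n = σ₂ ^ (n - m) := by
    rw [inv_mul_eq_iff_eq_mul, ← pow_add, Nat.add_sub_cancel' hmn.le]
  rw [hr.lt_iff_one_lt_inv_mul, hquot]
  exact (hcone _).2 (.inr ⟨n - m, by omega, rfl⟩)

theorem σ₂_zpow_lt_of_isSigmaOnePositive (hr : IsLeftOrder r) (hcone : HasDehornoyCone r)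
    (n : ℤ) {x : B₃} (hx : IsSigmaOnePositive x) : r (σ₂ ^ n) x := by
  rw [hr.lt_iff_one_lt_inv_mul, ← zpow_neg]
  exact one_lt_of_isSigmaOnePositive hcone (hx.mul_mem_left (σ₂_zpow_mem_noSigmaOneInv _))

theorem isConvexSubgroup_zpowers_σ₂ (hr : IsLeftOrder r)
    (hcone : HasDehornoyCone r) : IsConvexSubgroup r (zpowers σ₂) := by
  rintro _ g _ ⟨a, rfl⟩ ⟨b, rfl⟩ hfg hgh
  rcases (hcone _).1 (hr.lt_iff_one_lt_inv_mul.1 hfg) with hpos | ⟨k, -, hk⟩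
  · have hquot : (σ₂ ^ a)⁻¹ * σ₂ ^ b = σ₂ ^ (b - a) := by
      rw [← zpow_neg, ← zpow_add, neg_add_eq_sub]
    have := hr.2 (σ₂ ^ a)⁻¹ _ _ hgh
    rw [hquot] at this
    exact absurd this (hr.asymm (σ₂_zpow_lt_of_isSigmaOnePositive hr hcone _ hpos))
  · rw [inv_mul_eq_iff_eq_mul.1 hk]
    exact mul_mem (zpow_mem (mem_zpowers σ₂) a) (pow_mem (mem_zpowers σ₂) k)

theorem exists_isSigmaOnePositive_mem_of_not_le (hr : IsLeftOrder r) (hcone : HasDehornoyCone r)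
    {C : Subgroup B₃} (hC : ¬C ≤ zpowers σ₂) : ∃ x ∈ C, IsSigmaOnePositive x := by
  obtain ⟨g, hgC, hg⟩ := Set.not_subset.mp hC
  have of_one_lt : ∀ h ∈ C, h ∉ zpowers σ₂ → r 1 h → ∃ x ∈ C, IsSigmaOnePositive x :=
    fun h hhC hh h1 => ((hcone h).1 h1).elim (⟨h, hhC, ·⟩)
      fun ⟨k, _, hk⟩ => absurd (hk ▸ pow_mem (mem_zpowers σ₂) k) hh
  rcases hr.one_lt_or_one_lt_inv (g := g) (by rintro rfl; exact hg (one_mem _)) with h | h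
  · exact of_one_lt g hgC hg h
  · exact of_one_lt g⁻¹ (inv_mem hgC) (by rwa [inv_mem_iff]) h

theorem IsConvexSubgroup.eq_top_of_isSigmaOnePositive_mem (hr : IsLeftOrder r)
    (hcone : HasDehornoyCone r)
    {C : Subgroup B₃} (hC : IsConvexSubgroup r C) {x : B₃} (hxC : x ∈ C)
    (hx : IsSigmaOnePositive x) : C = ⊤ := by
  have hσ₂_pow (n : ℕ) : σ₂ ^ n ∈ noSigmaOneInv := by
    simpa using σ₂_zpow_mem_noSigmaOneInv n
  have hσ₂ : σ₂ ∈ C := by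
    refine hC 1 σ₂ x (one_mem C) hxC (by simpa using σ₂_pow_lt_σ₂_pow hr hcone zero_lt_one) ?_
    rw [hr.lt_iff_one_lt_inv_mul]
    exact one_lt_of_isSigmaOnePositive hcone
      (hx.mul_mem_left (by simpa using σ₂_zpow_mem_noSigmaOneInv (-1)))
  obtain ⟨m, hm⟩ := hx.exists_σ₁_inv_mul_σ₂_pow_mul
  have hyC : σ₂ ^ m * x ∈ C := mul_mem (pow_mem hσ₂ m) hxC
  have hσ₁ : σ₁ ∈ C := by
    refine hC _ σ₁ _ (inv_mem hyC) hyC ?_ ?_ <;> rw [hr.lt_iff_one_lt_inv_mul]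
    · rw [inv_inv]
      exact one_lt_of_isSigmaOnePositive hcone
        ((hx.mul_mem_left (hσ₂_pow m)).mul_mem_right isSigmaOnePositive_σ₁.mem_noSigmaOneInv)
    · rw [← mul_assoc]
      exact one_lt_of_isSigmaOnePositive hcone hm
  exact eq_top_of_σ₁_mem_of_σ₂_mem hσ₁ hσ₂

theorem IsConvexSubgroup.eq_zpowers_σ₂_of_le (hr : IsLeftOrder r) (hcone : HasDehornoyCone r)
    {C : Subgroup B₃} (hC : IsConvexSubgroup r C) (hle : C ≤ zpowers σ₂) {g : B₃} (hgC : g ∈ C)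
    (hg : g ≠ 1) : C = zpowers σ₂ := by
  obtain ⟨n, rfl⟩ := mem_zpowers_iff.mp (hle hgC)
  have hn : 0 < n.natAbs := Int.natAbs_pos.mpr (by rintro rfl; exact hg (zpow_zero σ₂))
  have hk : σ₂ ^ n.natAbs ∈ C := by
    rcases Int.natAbs_eq n with h | h
    · rwa [← zpow_natCast, ← h]
    · rwa [← zpow_natCast, ← inv_mem_iff, ← zpow_neg, ← h]
  have h2k : σ₂ ^ (n.natAbs * 2) ∈ C := by
    rw [pow_mul]
    exact pow_mem hk 2
  have hσ₂ : σ₂ ∈ C :=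
    hC 1 σ₂ _ (one_mem C) h2k (by simpa using σ₂_pow_lt_σ₂_pow hr hcone zero_lt_one)
      (by simpa using σ₂_pow_lt_σ₂_pow hr hcone (m := 1) (by omega))
  exact le_antisymm hle (zpowers_le.mpr hσ₂)

end DehornoyOrder

/-- For a left order on `B₃` whose positive cone consists exactly of the
σ₁-positive elements together with the positive powers of σ₂ (i.e. the Dehornoy
ordering), the convex subgroups are exactly `{1}`, `⟨σ₂⟩` and `B₃`. -/
theorem stmt_13 (r : B₃ → B₃ → Prop) (hr : IsLeftOrder r)
    (hcone : {β : B₃ | r 1 β} =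
      {β : B₃ | IsSigmaOnePositive β} ∪ {β : B₃ | ∃ k : ℕ, 1 ≤ k ∧ β = σ₂ ^ k}) :
    ∀ C : Subgroup B₃, IsConvexSubgroup r C ↔
      (C = ⊥ ∨ C = Subgroup.zpowers σ₂ ∨ C = ⊤) := by
  have hcone' : HasDehornoyCone r := fun β => Set.ext_iff.mp hcone β
  intro C
  refine ⟨fun hC => ?_, ?_⟩
  · by_cases hle : C ≤ Subgroup.zpowers σ₂
    · rcases C.bot_or_exists_ne_one with hbot | ⟨g, hgC, hg⟩
      · exact .inl hbot
      · exact .inr (.inl (hC.eq_zpowers_σ₂_of_le hr hcone' hle hgC hg))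
    · obtain ⟨x, hxC, hx⟩ := exists_isSigmaOnePositive_mem_of_not_le hr hcone' hle
      exact .inr (.inr (hC.eq_top_of_isSigmaOnePositive_mem hr hcone' hxC hx))
  · rintro (rfl | rfl | rfl)
    · exact hr.isConvexSubgroup_bot
    · exact isConvexSubgroup_zpowers_σ₂ hr hcone'
    · exact isConvexSubgroup_top r
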